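/- arXiv:2602.20154 — 6 statements merged into one kernel-verified Lean document; each statement's English description precedes it below -/
import Mathlib

section
/- Let m be a finite type, ι a finite index type, N : ℂ, φ : ι → ι → ℂ, and Q : ι → Matrix m m ℂ a family of matrices satisfying: (i) Q k * (Q k)ᴴ = 1 for all k; (ii) trace((Q k)ᴴ * Q l) = (if k = l then N else 0) for all k, l; and (iii) Q i * Q j = φ i j • (Q j * Q i) for all i, j. Then for every f : ι → ℂ, the transfer matrix of the diagonal superoperator X ↦ ∑_k f k • (Q k * X * (Q k)ᴴ) in the basis Q is diagonal: for all i, j, trace((Q i)ᴴ * ∑_k f k • (Q k * Q j * (Q k)ᴴ)) = (if i = j then N * ∑_k f k * φ k i else 0). -/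
open Matrix

/-- The transfer matrix of a diagonal superoperator in a q-commuting orthogonal
basis is diagonal, with diagonal entries given by the twisted Walsh–Hadamard
transform of the coefficients. -/
theorem diagonal_superoperator_transfer_matrix {m ι : Type*} [Fintype m] [Fintype ι]
    [DecidableEq m] [DecidableEq ι]
    (N : ℂ) (φ : ι → ι → ℂ) (Q : ι → Matrix m m ℂ)
    (hunit : ∀ k : ι, Q k * (Q k)ᴴ = 1)
    (horth : ∀ k l : ι, ((Q k)ᴴ * Q l).trace = if k = l then N else 0)
    (hcomm : ∀ i j : ι, Q i * Q j = φ i j • (Q j * Q i)) :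
    ∀ (f : ι → ℂ) (i j : ι),
      ((Q i)ᴴ * ∑ k : ι, f k • (Q k * Q j * (Q k)ᴴ)).trace =
        if i = j then N * ∑ k : ι, f k * φ k i else 0 := by
  intro f i j
  have key : ∀ k, Q k * Q j * (Q k)ᴴ = φ k j • Q j := by
    intro k
    rw [hcomm k j, smul_mul_assoc, mul_assoc, hunit k, mul_one]
  simp only [key, smul_smul]
  rw [Finset.mul_sum, trace_sum]
  simp only [mul_smul_comm, trace_smul, horth, smul_eq_mul, mul_ite, mul_zero]
  split_ifs with h
  · subst h
    rw [Finset.mul_sum]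
    congr 1; ext k; ring
  · simp
end

section
/- Let n : ℕ and let f be a complex-valued function on the n-qubit Pauli indices. Define the diagonal superoperator D by D X = ∑_k f k • (P k * X * (P k)ᴴ). Then D admits the projector representation with Walsh–Hadamard transformed coefficients: for every matrix X indexed by (Fin n → ZMod 2), D X = (2^n : ℂ)⁻¹ • ∑_i ((∑_k f k * K i k) * trace((P i)ᴴ * X)) • P i, where K i k = (if P i * P k = P k * P i then (1 : ℂ) else -1). -/
open Matrix

/-- An `n`-qubit Pauli index: a pair `(a_z, a_x)` of bit strings. -/
abbrev PauliIdx (n : ℕ) := (Fin n → ZMod 2) × (Fin n → ZMod 2)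

/-- The `n`-qubit Pauli string associated with a Pauli index. -/
def P {n : ℕ} (a : PauliIdx n) :
    Matrix (Fin n → ZMod 2) (Fin n → ZMod 2) ℂ :=
  Matrix.of fun i j => ∏ t : Fin n,
    ((if a.1 t * i t = 1 then (-1 : ℂ) else 1) * (if i t = j t + a.2 t then 1 else 0))

/-- The Walsh–Hadamard commutation matrix of the `n`-qubit Pauli strings. -/
noncomputable def K {n : ℕ} (i k : PauliIdx n) : ℂ :=
  if P i * P k = P k * P i then (1 : ℂ) else -1

namespace PauliAux

def χ (u : ZMod 2) : ℂ := if u = 1 then -1 else 1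

lemma zmod2_cases : ∀ u : ZMod 2, u = 0 ∨ u = 1 := by decide

lemma χ_add (u v : ZMod 2) : χ (u + v) = χ u * χ v := by
  rcases zmod2_cases u with h | h <;> rcases zmod2_cases v with h' | h' <;>
    subst h <;> subst h' <;> simp [χ, show (1:ZMod 2)+1 = 0 from by decide] <;> norm_num

lemma χ_sq (u : ZMod 2) : χ u * χ u = 1 := by
  rcases zmod2_cases u with h | h <;> subst h <;> norm_num [χ]

def ε {n : ℕ} (z x : Fin n → ZMod 2) : ℂ := ∏ t, χ (z t * x t)

variable {n : ℕ}

lemma ε_add_right (z x y : Fin n → ZMod 2) : ε z (x + y) = ε z x * ε z y := by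
  simp only [ε, Pi.add_apply, mul_add, χ_add, Finset.prod_mul_distrib]

lemma ε_sq (z x : Fin n → ZMod 2) : ε z x * ε z x = 1 := by
  simp only [ε, ← Finset.prod_mul_distrib, χ_sq, Finset.prod_const_one]

lemma vadd_self (x : Fin n → ZMod 2) : x + x = 0 := by
  funext t
  have : ∀ u : ZMod 2, u + u = 0 := by decide
  simp [this]

lemma ε_zero (z : Fin n → ZMod 2) : ε z 0 = 1 := by
  simp [ε, χ]

lemma ε_comm (z x : Fin n → ZMod 2) : ε z x = ε x z := by
  simp [ε, mul_comm]

lemma ε_pm (z x : Fin n → ZMod 2) : ε z x = 1 ∨ ε z x = -1 :=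
  mul_self_eq_one_iff.mp (ε_sq z x)

lemma P_apply (a : PauliIdx n) (i j : Fin n → ZMod 2) :
    P a i j = ε a.1 i * (if i = j + a.2 then 1 else 0) := by
  simp only [P, Matrix.of_apply]
  rw [Finset.prod_mul_distrib]
  have h1 : (∏ t, (if a.1 t * i t = 1 then (-1 : ℂ) else 1)) = ε a.1 i := by
    refine Finset.prod_congr rfl fun t _ => ?_
    rcases zmod2_cases (a.1 t * i t) with h | h <;> simp [h, χ]
  have h2 : (∏ t : Fin n, (if i t = j t + a.2 t then (1 : ℂ) else 0))
      = if i = j + a.2 then 1 else 0 := by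
    rw [Finset.prod_boole]
    simp [funext_iff]
  rw [h1, h2]

lemma vec_eq_shift {a b c : Fin n → ZMod 2} : a = b + c ↔ b = a + c := by
  constructor <;> rintro rfl <;> rw [add_assoc, vadd_self] <;> simp

-- sum over z of characters
lemma char_sum (y : Fin n → ZMod 2) :
    ∑ z : Fin n → ZMod 2, ε z y = if y = 0 then (2 ^ n : ℂ) else 0 := by
  unfold ε
  rw [← Fintype.prod_sum (fun t u => χ (u * y t))]
  have h : ∀ t : Fin n, ∑ u : ZMod 2, χ (u * y t)
      = if y t = 0 then (2 : ℂ) else 0 := by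
    intro t
    have huniv : (Finset.univ : Finset (ZMod 2)) = {0, 1} := by decide
    rcases zmod2_cases (y t) with h | h <;> rw [huniv] <;>
      simp [h, Finset.sum_pair, χ] <;> norm_num
  rw [Finset.prod_congr rfl fun t _ => h t]
  by_cases hy : y = 0
  · simp [hy]
  · rw [if_neg hy]
    obtain ⟨t, ht⟩ : ∃ t, y t ≠ 0 := by
      by_contra hc
      push_neg at hc
      exact hy (funext hc)
    exact Finset.prod_eq_zero (Finset.mem_univ t) (by simp [ht])

end PauliAux

section More
variable {n : ℕ}
open PauliAux

lemma vec_eq_shift' {a b c : Fin n → ZMod 2} : a = b + c ↔ c = b + a := by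
  constructor <;> rintro rfl
  · rw [← add_assoc, vadd_self, zero_add]
  · rw [← add_assoc, vadd_self, zero_add]

lemma vec_add_eq_zero {a b : Fin n → ZMod 2} : a + b = 0 ↔ a = b := by
  constructor
  · intro h
    have := congrArg (· + b) h
    simpa [add_assoc, vadd_self] using this
  · rintro rfl; exact vadd_self _

lemma ε_star (z x : Fin n → ZMod 2) : star (ε z x) = ε z x := by
  rcases ε_pm z x with h | h <;> simp [h]

lemma P_mul (a b : PauliIdx n) :
    P a * P b = ε b.1 a.2 • Matrix.of (fun i j =>
      (ε a.1 i * ε b.1 i) * (if i = j + (a.2 + b.2) then (1 : ℂ) else 0)) := by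
  ext i j
  rw [Matrix.mul_apply]
  simp only [P_apply, Matrix.smul_apply, Matrix.of_apply, smul_eq_mul]
  calc ∑ m, (ε a.1 i * if i = m + a.2 then 1 else 0) *
          (ε b.1 m * if m = j + b.2 then 1 else 0)
      = ∑ m, if m = i + a.2 then
          ε a.1 i * (ε b.1 m * if m = j + b.2 then 1 else 0) else 0 := by
        refine Finset.sum_congr rfl fun m _ => ?_
        by_cases h : m = i + a.2
        · subst h
          rw [if_pos (by rw [add_assoc, vadd_self, add_zero]), if_pos rfl]
          ring
        · rw [if_neg (fun hi => h (vec_eq_shift.mp hi)), if_neg h, mul_zero, zero_mul]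
    _ = ε a.1 i * (ε b.1 (i + a.2) * if i + a.2 = j + b.2 then 1 else 0) := by
        rw [Finset.sum_ite_eq' Finset.univ (i + a.2)
          (fun m => ε a.1 i * (ε b.1 m * if m = j + b.2 then 1 else 0))]
        simp
    _ = ε b.1 a.2 * (ε a.1 i * ε b.1 i * if i = j + (a.2 + b.2) then 1 else 0) := by
        rw [ε_add_right]
        have hcond : (i + a.2 = j + b.2) = (i = j + (a.2 + b.2)) := by
          apply propext
          constructor
          · intro h
            have : a.2 = i + (j + b.2) := by rw [← h]; exact (vec_eq_shift'.mp rfl)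
            rw [add_comm a.2 b.2, ← add_assoc]
            exact vec_eq_shift.mp (vec_eq_shift'.mpr this)
          · rintro rfl
            rw [add_assoc, add_assoc, add_comm b.2 a.2, ← add_assoc (a.2), vadd_self,
              zero_add]
        simp only [hcond]
        ring

lemma P_comm_sign (a b : PauliIdx n) :
    P a * P b = (ε b.1 a.2 * ε a.1 b.2) • (P b * P a) := by
  rw [P_mul a b, P_mul b a, smul_smul]
  have hcore : (Matrix.of (fun i j =>
      (ε b.1 i * ε a.1 i) * (if i = j + (b.2 + a.2) then (1 : ℂ) else 0)))
      = (Matrix.of (fun i j =>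
      (ε a.1 i * ε b.1 i) * (if i = j + (a.2 + b.2) then (1 : ℂ) else 0))) := by
    ext i j
    rw [Matrix.of_apply, Matrix.of_apply, mul_comm (ε b.1 i), add_comm b.2 a.2]
  rw [hcore, mul_assoc, mul_comm (ε a.1 b.2), ε_sq, mul_one]

lemma P_mul_self (a : PauliIdx n) :
    P a * P a = ε a.1 a.2 • (1 : Matrix (Fin n → ZMod 2) (Fin n → ZMod 2) ℂ) := by
  rw [P_mul]
  ext i j
  simp only [Matrix.smul_apply, Matrix.of_apply, smul_eq_mul]
  rw [ε_sq, vadd_self, add_zero, one_mul]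
  by_cases h : i = j <;> simp [h, Matrix.one_apply]

lemma P_conjT (a : PauliIdx n) : (P a)ᴴ = ε a.1 a.2 • P a := by
  ext i j
  rw [Matrix.conjTranspose_apply, Matrix.smul_apply, P_apply, P_apply, star_mul',
    smul_eq_mul]
  by_cases h : i = j + a.2
  · have hj : j = i + a.2 := vec_eq_shift.mp h
    rw [if_pos hj, if_pos h, star_one, mul_one, mul_one, ε_star, h, ε_add_right,
      mul_comm (ε a.1 j) (ε a.1 a.2), ← mul_assoc, ε_sq, one_mul]
  · rw [if_neg (fun hj => h (vec_eq_shift.mp hj)), if_neg h]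
    simp

lemma P_mul_conjT (a : PauliIdx n) : P a * (P a)ᴴ = 1 := by
  rw [P_conjT, Matrix.mul_smul, P_mul_self, smul_smul, ε_sq, one_smul]

lemma conj_key (i k : PauliIdx n) : P k * P i * (P k)ᴴ = K i k • P i := by
  unfold K
  split_ifs with h
  · rw [← h, mul_assoc, P_mul_conjT, mul_one, one_smul]
  · have hc := P_comm_sign k i
    rcases ε_pm i.1 k.2 with h1 | h1 <;> rcases ε_pm k.1 i.2 with h2 | h2 <;>
        rw [h1, h2] at hc
    · exact absurd (by rw [hc, one_mul, one_smul]) h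
    · rw [hc]
      rw [one_mul, Matrix.smul_mul, mul_assoc, P_mul_conjT, mul_one]
    · rw [hc]
      rw [mul_one, Matrix.smul_mul, mul_assoc, P_mul_conjT, mul_one]
    · exact absurd (by rw [hc]; norm_num) h

lemma trace_formula (k : PauliIdx n) (X : Matrix (Fin n → ZMod 2) (Fin n → ZMod 2) ℂ) :
    ((P k)ᴴ * X).trace = ∑ a, ε k.1 (a + k.2) * X (a + k.2) a := by
  rw [Matrix.trace]
  refine Finset.sum_congr rfl fun a _ => ?_
  rw [Matrix.diag_apply, Matrix.mul_apply]
  calc ∑ m, (P k)ᴴ a m * X m a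
      = ∑ m, if m = a + k.2 then ε k.1 m * X m a else 0 := by
        refine Finset.sum_congr rfl fun m _ => ?_
        rw [Matrix.conjTranspose_apply, P_apply, star_mul', ε_star]
        by_cases h : m = a + k.2
        · rw [if_pos h, if_pos h, star_one, mul_one]
        · rw [if_neg h, if_neg h, star_zero, mul_zero, zero_mul]
    _ = ε k.1 (a + k.2) * X (a + k.2) a := by
        rw [Finset.sum_ite_eq' Finset.univ (a + k.2) (fun m => ε k.1 m * X m a)]
        simp

lemma expansion (X : Matrix (Fin n → ZMod 2) (Fin n → ZMod 2) ℂ) :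
    (2 ^ n : ℂ)⁻¹ • ∑ i : PauliIdx n, ((P i)ᴴ * X).trace • P i = X := by
  have key2 : ∑ i : PauliIdx n, ((P i)ᴴ * X).trace • P i = (2 ^ n : ℂ) • X := by
    ext p q
    simp only [Matrix.sum_apply, Matrix.smul_apply, trace_formula, P_apply, smul_eq_mul]
    rw [Fintype.sum_prod_type]
    have step1 : ∀ z : Fin n → ZMod 2,
        ∑ w : Fin n → ZMod 2, (∑ a, ε z (a + w) * X (a + w) a) *
          (ε z p * if p = q + w then 1 else 0)
        = (∑ a, ε z (a + (q + p)) * X (a + (q + p)) a) * ε z p := by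
      intro z
      calc ∑ w : Fin n → ZMod 2, (∑ a, ε z (a + w) * X (a + w) a) *
              (ε z p * if p = q + w then 1 else 0)
          = ∑ w, if w = q + p then
              (∑ a, ε z (a + w) * X (a + w) a) * ε z p else 0 := by
            refine Finset.sum_congr rfl fun w _ => ?_
            by_cases h : w = q + p
            · rw [if_pos h, if_pos (vec_eq_shift'.mpr h), mul_one]
            · rw [if_neg h, if_neg (fun hw => h (vec_eq_shift'.mp hw)), mul_zero,
                mul_zero]
        _ = _ := by
            rw [Finset.sum_ite_eq' Finset.univ (q + p)
              (fun w => (∑ a, ε z (a + w) * X (a + w) a) * ε z p)]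
            simp
    rw [Finset.sum_congr rfl fun z _ => step1 z]
    simp only [Finset.sum_mul]
    rw [Finset.sum_comm]
    have step2 : ∀ a : Fin n → ZMod 2,
        ∑ z : Fin n → ZMod 2, ε z (a + (q + p)) * X (a + (q + p)) a * ε z p
        = X (a + (q + p)) a * if a = q then (2 ^ n : ℂ) else 0 := by
      intro a
      have hz : ∀ z : Fin n → ZMod 2,
          ε z (a + (q + p)) * X (a + (q + p)) a * ε z p
          = X (a + (q + p)) a * ε z (a + q) := by
        intro z
        have : a + (q + p) + p = a + q := by
          rw [add_assoc, add_assoc, vadd_self, add_zero]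
        rw [mul_comm (ε z (a + (q + p))), mul_assoc, ← ε_add_right, this]
      rw [Finset.sum_congr rfl fun z _ => hz z, ← Finset.mul_sum, char_sum]
      congr 1
      by_cases h : a = q
      · rw [if_pos h, if_pos (by rw [h, vadd_self])]
      · rw [if_neg h, if_neg (fun h0 => h (vec_add_eq_zero.mp h0))]
    rw [Finset.sum_congr rfl fun a _ => step2 a]
    calc ∑ a : Fin n → ZMod 2, X (a + (q + p)) a * (if a = q then (2 ^ n : ℂ) else 0)
        = ∑ a : Fin n → ZMod 2, (if a = q then X (a + (q + p)) a * (2 ^ n : ℂ) else 0) := by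
          refine Finset.sum_congr rfl fun a _ => ?_
          by_cases h : a = q <;> simp [h]
      _ = X (q + (q + p)) q * (2 ^ n : ℂ) := by
          rw [Finset.sum_ite_eq' Finset.univ q (fun a => X (a + (q + p)) a * (2 ^ n : ℂ))]
          simp
      _ = (2 ^ n : ℂ) * X p q := by
          rw [← add_assoc, vadd_self, zero_add, mul_comm]
  rw [key2, smul_smul, inv_mul_cancel₀ (pow_ne_zero n two_ne_zero), one_smul]

end More

/-- A superoperator with a diagonal operator-sum decomposition in the Pauli basis
admits the projector representation with Walsh–Hadamard transformed coefficients. -/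
theorem diagonal_superoperator_projector_form (n : ℕ) (f : PauliIdx n → ℂ)
    (X : Matrix (Fin n → ZMod 2) (Fin n → ZMod 2) ℂ) :
    ∑ k : PauliIdx n, f k • (P k * X * (P k)ᴴ) =
      (2 ^ n : ℂ)⁻¹ • ∑ i : PauliIdx n,
        ((∑ k : PauliIdx n, f k * K i k) * ((P i)ᴴ * X).trace) • P i := by
  have hG := expansion (n := n) X
  calc ∑ k : PauliIdx n, f k • (P k * X * (P k)ᴴ)
      = ∑ k : PauliIdx n, f k • (P k * ((2 ^ n : ℂ)⁻¹ •
          ∑ i : PauliIdx n, ((P i)ᴴ * X).trace • P i) * (P k)ᴴ) := by rw [hG]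
    _ = ∑ k : PauliIdx n, f k • ((2 ^ n : ℂ)⁻¹ •
          ∑ i : PauliIdx n, (((P i)ᴴ * X).trace * K i k) • P i) := by
        refine Finset.sum_congr rfl fun k _ => ?_
        rw [Matrix.mul_smul, Matrix.smul_mul]
        congr 2
        rw [Matrix.mul_sum, Matrix.sum_mul]
        refine Finset.sum_congr rfl fun i _ => ?_
        rw [Matrix.mul_smul, Matrix.smul_mul, conj_key, smul_smul]
    _ = (2 ^ n : ℂ)⁻¹ • ∑ k : PauliIdx n, f k •
          ∑ i : PauliIdx n, (((P i)ᴴ * X).trace * K i k) • P i := by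
        rw [Finset.smul_sum]
        exact Finset.sum_congr rfl fun k _ => smul_comm _ _ _
    _ = (2 ^ n : ℂ)⁻¹ • ∑ i : PauliIdx n,
        ((∑ k : PauliIdx n, f k * K i k) * ((P i)ᴴ * X).trace) • P i := by
        congr 1
        calc ∑ k : PauliIdx n, f k • ∑ i : PauliIdx n,
                (((P i)ᴴ * X).trace * K i k) • P i
            = ∑ k : PauliIdx n, ∑ i : PauliIdx n,
                (f k * (((P i)ᴴ * X).trace * K i k)) • P i := by
              refine Finset.sum_congr rfl fun k _ => ?_
              rw [Finset.smul_sum]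
              exact Finset.sum_congr rfl fun i _ => smul_smul _ _ _
          _ = ∑ i : PauliIdx n, ∑ k : PauliIdx n,
                (f k * (((P i)ᴴ * X).trace * K i k)) • P i := Finset.sum_comm
          _ = ∑ i : PauliIdx n,
                ((∑ k : PauliIdx n, f k * K i k) * ((P i)ᴴ * X).trace) • P i := by
              refine Finset.sum_congr rfl fun i _ => ?_
              rw [← Finset.sum_smul]
              congr 1
              rw [Finset.sum_mul]
              exact Finset.sum_congr rfl fun k _ => by ring
end

section
/- Let n : ℕ, ι an index type, and p, q : ι → (n-qubit Pauli indices). For each i, set A i = P (p i) ⊗ₖ (P (q i)).map star. Then all the A i mutually commute, i.e. A i * A j = A j * A i for all i, j, if and only if for all pairs i, j either both left and right factors anticommute, i.e. P (p i) * P (p j) = -(P (p j) * P (p i)) and P (q i) * P (q j) = -(P (q j) * P (q i)), or both left and right factors commute, i.e. P (p i) * P (p j) = P (p j) * P (p i) and P (q i) * P (q j) = P (q j) * P (q i). -/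
open Kronecker Matrix

/-!
A Pauli string is a signed permutation matrix: `P a` sends the basis vector `e_j` to
`±e_(j + a_x)`. Computing products entrywise gives the Weyl relation
`P a * P b = (-1) ^ ω(a, b) • P b * P a` for the symplectic form
`ω(a, b) = a_z ⬝ b_x + b_z ⬝ a_x` over `ZMod 2`. The entries of `P a` are real, so
`A i = P (p i) ⊗ₖ P (q i)`, and by the mixed-product rule
`A i * A j = (-1) ^ (ω(p i, p j) + ω(q i, q j)) • A j * A i` with `A j * A i ≠ 0`.
Hence `A i` and `A j` commute exactly when the two symplectic forms agree, i.e. are both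
`1` (both factors anticommute) or both `0` (both factors commute).
-/

lemma ZMod.eq_zero_or_eq_one (c : ZMod 2) : c = 0 ∨ c = 1 := by
  revert c; decide

lemma ZMod.eq_iff_both_one_or_both_zero (x y : ZMod 2) :
    x = y ↔ x = 1 ∧ y = 1 ∨ x = 0 ∧ y = 0 := by
  revert x y; decide

def bitSign : AddChar (ZMod 2) ℂ where
  toFun c := if c = 1 then -1 else 1
  map_zero_eq_one' := by simp
  map_add_eq_mul' a b := by
    rcases a.eq_zero_or_eq_one with rfl | rfl <;> rcases b.eq_zero_or_eq_one with rfl | rfl <;>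
      simp [show (1 : ZMod 2) + 1 = 0 from rfl]

lemma bitSign_apply (c : ZMod 2) : bitSign c = if c = 1 then -1 else 1 := rfl

lemma bitSign_sum {ι : Type*} (s : Finset ι) (f : ι → ZMod 2) :
    bitSign (∑ t ∈ s, f t) = ∏ t ∈ s, bitSign (f t) := by
  simpa [← ofAdd_sum] using map_prod bitSign.toMonoidHom (fun t => Multiplicative.ofAdd (f t)) s

lemma bitSign_eq_one_iff {c : ZMod 2} : bitSign c = 1 ↔ c = 0 := by
  rcases c.eq_zero_or_eq_one with rfl | rfl <;> norm_num [bitSign_apply]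

lemma bitSign_eq_neg_one_iff {c : ZMod 2} : bitSign c = -1 ↔ c = 1 := by
  rcases c.eq_zero_or_eq_one with rfl | rfl <;> norm_num [bitSign_apply]

lemma bitSign_ne_zero (c : ZMod 2) : bitSign c ≠ 0 := by
  rcases c.eq_zero_or_eq_one with rfl | rfl <;> norm_num [bitSign_apply]

lemma star_bitSign (c : ZMod 2) : star (bitSign c) = bitSign c := by
  rcases c.eq_zero_or_eq_one with rfl | rfl <;> norm_num [bitSign_apply]

lemma bitSign_mul_self (c : ZMod 2) : bitSign c * bitSign c = 1 := by
  rw [← AddChar.map_add_eq_mul, CharTwo.add_self_eq_zero, AddChar.map_zero_eq_one]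

section SMul

variable {R M : Type*} [Ring R] [IsCancelMulZero R] [AddCommGroup M] [Module R M]
  [Module.IsTorsionFree R M] {m : M}

lemma smul_eq_self_iff (hm : m ≠ 0) {r : R} : r • m = m ↔ r = 1 :=
  (smul_left_injective R hm).eq_iff' (one_smul R m)

lemma smul_eq_neg_self_iff (hm : m ≠ 0) {r : R} : r • m = -m ↔ r = -1 :=
  (smul_left_injective R hm).eq_iff' (neg_one_smul R m)

end SMul

lemma Matrix.kronecker_ne_zero {R l m n p : Type*} [MulZeroClass R] [NoZeroDivisors R]
    {A : Matrix l m R} {B : Matrix n p R} (hA : A ≠ 0) (hB : B ≠ 0) : A ⊗ₖ B ≠ 0 := by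
  obtain ⟨i, j, hij⟩ : ∃ i j, A i j ≠ 0 := by
    by_contra! h; exact hA (Matrix.ext h)
  obtain ⟨k, l, hkl⟩ : ∃ k l, B k l ≠ 0 := by
    by_contra! h; exact hB (Matrix.ext h)
  intro h
  exact mul_ne_zero hij hkl (congr_fun₂ h (i, k) (j, l))

section Pauli

variable {n : ℕ}

def symplecticForm (a b : PauliIdx n) : ZMod 2 := a.1 ⬝ᵥ b.2 + b.1 ⬝ᵥ a.2

lemma P_apply (a : PauliIdx n) (i j : Fin n → ZMod 2) :
    P a i j = if j = i + a.2 then bitSign (a.1 ⬝ᵥ i) else 0 := by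
  have hij : (∀ t, i t = j t + a.2 t) ↔ j = i + a.2 := by
    rw [funext_iff]
    exact forall_congr' fun t => eq_comm.trans CharTwo.add_eq_iff_eq_add
  rw [P, of_apply, Finset.prod_mul_distrib, Finset.prod_boole, dotProduct, bitSign_sum]
  simp only [Finset.mem_univ, forall_const, hij, ← bitSign_apply]
  split_ifs <;> simp

lemma P_map_star (a : PauliIdx n) : (P a).map star = P a := by
  ext i j
  rw [map_apply, P_apply, apply_ite star, star_bitSign, star_zero]

lemma P_ne_zero (a : PauliIdx n) : P a ≠ 0 := fun h => by
  simpa [P_apply] using congr_fun₂ h 0 a.2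

lemma P_mul_P (a b : PauliIdx n) : P a * P b = bitSign (b.1 ⬝ᵥ a.2) • P (a + b) := by
  ext i j
  simp only [mul_apply, P_apply, ite_mul, zero_mul, Finset.sum_ite_eq', Finset.mem_univ,
    if_true, Matrix.smul_apply, smul_ite, smul_zero, Prod.fst_add, Prod.snd_add, ← add_assoc]
  split_ifs
  · simp only [dotProduct_add, add_dotProduct, AddChar.map_add_eq_mul, smul_eq_mul]
    ring
  · rw [mul_zero]

lemma P_mul_P_ne_zero (a b : PauliIdx n) : P a * P b ≠ 0 := by
  rw [P_mul_P]
  exact smul_ne_zero (bitSign_ne_zero _) (P_ne_zero _)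

lemma P_mul_P_eq_smul_swap (a b : PauliIdx n) :
    P a * P b = bitSign (symplecticForm a b) • (P b * P a) := by
  rw [P_mul_P, P_mul_P, smul_smul, add_comm b a, symplecticForm, AddChar.map_add_eq_mul,
    mul_right_comm, bitSign_mul_self, one_mul]

lemma P_commute_iff (a b : PauliIdx n) :
    P a * P b = P b * P a ↔ symplecticForm a b = 0 := by
  rw [P_mul_P_eq_smul_swap, smul_eq_self_iff (P_mul_P_ne_zero b a), bitSign_eq_one_iff]

lemma P_anticommute_iff (a b : PauliIdx n) :
    P a * P b = -(P b * P a) ↔ symplecticForm a b = 1 := by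
  rw [P_mul_P_eq_smul_swap, smul_eq_neg_self_iff (P_mul_P_ne_zero b a), bitSign_eq_neg_one_iff]

lemma P_kronecker_P_commute_iff (a b c d : PauliIdx n) :
    (P a ⊗ₖ P c) * (P b ⊗ₖ P d) = (P b ⊗ₖ P d) * (P a ⊗ₖ P c) ↔
      symplecticForm a b = symplecticForm c d := by
  rw [← mul_kronecker_mul, ← mul_kronecker_mul, P_mul_P_eq_smul_swap a b,
    P_mul_P_eq_smul_swap c d, smul_kronecker, kronecker_smul, smul_smul,
    ← AddChar.map_add_eq_mul,
    smul_eq_self_iff (kronecker_ne_zero (P_mul_P_ne_zero b a) (P_mul_P_ne_zero d c)),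
    bitSign_eq_one_iff, CharTwo.add_eq_zero]

end Pauli

/-- Necessary and sufficient condition for mutual commutation of the transfer
matrices `P (p i) ⊗ₖ (P (q i)).map star`: for every pair, either both left and
right factors anticommute, or both left and right factors commute. -/
theorem transfer_matrices_commute_iff {n : ℕ} {ι : Type*}
    (p q : ι → PauliIdx n) :
    (∀ i j : ι,
        (P (p i) ⊗ₖ (P (q i)).map star) * (P (p j) ⊗ₖ (P (q j)).map star) =
          (P (p j) ⊗ₖ (P (q j)).map star) * (P (p i) ⊗ₖ (P (q i)).map star)) ↔
      (∀ i j : ι,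
        (P (p i) * P (p j) = -(P (p j) * P (p i)) ∧
          P (q i) * P (q j) = -(P (q j) * P (q i))) ∨
        (P (p i) * P (p j) = P (p j) * P (p i) ∧
          P (q i) * P (q j) = P (q j) * P (q i))) := by
  simp only [P_map_star, P_kronecker_P_commute_iff, P_anticommute_iff, P_commute_iff]
  exact forall₂_congr fun _ _ => ZMod.eq_iff_both_one_or_both_zero _ _
end

section
/- Let m, p be finite types, let P₁, P₂ : Matrix m m ℂ and Q₁, Q₂ : Matrix p p ℂ all be invertible (IsUnit), and suppose P₁ * P₂ = -(P₂ * P₁) and Q₁ * Q₂ = -(Q₂ * Q₁). Then no nonzero pure tensor is a simultaneous eigenvector of P₁ ⊗ₖ Q₁ and P₂ ⊗ₖ Q₂: there do not exist u : m → ℂ with u ≠ 0, v : p → ℂ with v ≠ 0, and scalars λ₁, λ₂ : ℂ such that (P₁ ⊗ₖ Q₁) *ᵥ (u ⊗ v) = λ₁ • (u ⊗ v) and (P₂ ⊗ₖ Q₂) *ᵥ (u ⊗ v) = λ₂ • (u ⊗ v). -/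
/-!
Since `(A ⊗ₖ B) *ᵥ (u ⊗ v) = (A *ᵥ u) ⊗ (B *ᵥ v)` and `Qᵢ *ᵥ v ≠ 0`, a pure tensor `u ⊗ v`
that is an eigenvector of `Pᵢ ⊗ₖ Qᵢ` forces `u` to be an eigenvector of `Pᵢ`, with a nonzero
eigenvalue `μᵢ` because `Pᵢ` is invertible. Then `P₁ P₂ u = μ₁ μ₂ u` and `P₂ P₁ u = μ₁ μ₂ u`,
which contradicts `P₁ P₂ = -P₂ P₁`.
-/

open Kronecker Matrix

/-- The pure tensor of two vectors. -/
def tensorVec {m p : Type*} (u : m → ℂ) (v : p → ℂ) : m × p → ℂ :=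
  fun z => u z.1 * v z.2

lemma kronecker_mulVec_tensorVec {l m p q : Type*} [Fintype m] [Fintype p]
    (A : Matrix l m ℂ) (B : Matrix q p ℂ) (u : m → ℂ) (v : p → ℂ) :
    (A ⊗ₖ B) *ᵥ tensorVec u v = tensorVec (A *ᵥ u) (B *ᵥ v) := by
  funext z
  simp only [mulVec, dotProduct, tensorVec, kroneckerMap_apply, Fintype.sum_prod_type,
    Finset.sum_mul_sum]
  exact Finset.sum_congr rfl fun i _ => Finset.sum_congr rfl fun j _ => by ring

lemma exists_eq_smul_of_tensorVec_eq_smul {m p : Type*} {x u : m → ℂ} {y v : p → ℂ} {c : ℂ}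
    (hy : y ≠ 0) (h : tensorVec x y = c • tensorVec u v) : ∃ μ : ℂ, x = μ • u := by
  obtain ⟨j, hj⟩ := Function.ne_iff.mp hy
  refine ⟨c * v j / y j, funext fun i => ?_⟩
  have hij : x i * y j = c * (u i * v j) := congrFun h (i, j)
  rw [Pi.smul_apply, smul_eq_mul, div_mul_eq_mul_div, eq_div_iff hj]
  linear_combination hij

lemma exists_mulVec_eq_smul_of_kronecker_mulVec_eq_smul {m p : Type*} [Fintype m] [Fintype p]
    [DecidableEq p] {A : Matrix m m ℂ} {B : Matrix p p ℂ} (hB : IsUnit B)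
    {u : m → ℂ} {v : p → ℂ} (hv : v ≠ 0) {c : ℂ}
    (h : (A ⊗ₖ B) *ᵥ tensorVec u v = c • tensorVec u v) : ∃ μ : ℂ, A *ᵥ u = μ • u := by
  have hBv : B *ᵥ v ≠ 0 := by
    simpa only [mulVec_zero] using (mulVec_injective_of_isUnit hB).ne hv
  rw [kronecker_mulVec_tensorVec] at h
  exact exists_eq_smul_of_tensorVec_eq_smul hBv h

lemma ne_zero_of_mulVec_eq_smul_of_isUnit {R n : Type*} [CommRing R] [Fintype n] [DecidableEq n]
    {A : Matrix n n R} (hA : IsUnit A) {u : n → R} (hu : u ≠ 0) {μ : R}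
    (h : A *ᵥ u = μ • u) : μ ≠ 0 := by
  rintro rfl
  rw [zero_smul, ← mulVec_zero A] at h
  exact hu (mulVec_injective_of_isUnit hA h)

lemma mul_eq_zero_of_anticommute_of_mulVec_eq_smul {K n : Type*} [Field K] [NeZero (2 : K)]
    [Fintype n] {A B : Matrix n n K} (hAB : A * B = -(B * A)) {u : n → K} (hu : u ≠ 0)
    {a b : K} (ha : A *ᵥ u = a • u) (hb : B *ᵥ u = b • u) : a * b = 0 := by
  have hAB_u : (A * B) *ᵥ u = (a * b) • u := by
    rw [← mulVec_mulVec, hb, mulVec_smul, ha, smul_smul, mul_comm]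
  have hBA_u : (A * B) *ᵥ u = -((a * b) • u) := by
    rw [hAB, neg_mulVec, ← mulVec_mulVec, ha, mulVec_smul, hb, smul_smul]
  have h2 : (2 * (a * b)) • u = 0 := by
    rw [two_mul, add_smul]
    exact add_eq_zero_iff_eq_neg.mpr (hAB_u.symm.trans hBA_u)
  exact (mul_eq_zero.mp ((smul_eq_zero.mp h2).resolve_right hu)).resolve_left two_ne_zero

theorem no_product_common_eigenvector_general {m p : Type*} [Fintype m] [Fintype p] [DecidableEq m] [DecidableEq p]
    (P₁ P₂ : Matrix m m ℂ) (Q₁ Q₂ : Matrix p p ℂ)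
    (hP₁ : IsUnit P₁) (hP₂ : IsUnit P₂) (hQ₁ : IsUnit Q₁) (hQ₂ : IsUnit Q₂)
    (hP : P₁ * P₂ = -(P₂ * P₁)) :
    ¬ ∃ (u : m → ℂ) (v : p → ℂ) (lam₁ lam₂ : ℂ), u ≠ 0 ∧ v ≠ 0 ∧
      (P₁ ⊗ₖ Q₁) *ᵥ tensorVec u v = lam₁ • tensorVec u v ∧
      (P₂ ⊗ₖ Q₂) *ᵥ tensorVec u v = lam₂ • tensorVec u v := by
  rintro ⟨u, v, lam₁, lam₂, hu, hv, h₁, h₂⟩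
  obtain ⟨μ₁, hμ₁⟩ := exists_mulVec_eq_smul_of_kronecker_mulVec_eq_smul hQ₁ hv h₁
  obtain ⟨μ₂, hμ₂⟩ := exists_mulVec_eq_smul_of_kronecker_mulVec_eq_smul hQ₂ hv h₂
  exact mul_ne_zero (ne_zero_of_mulVec_eq_smul_of_isUnit hP₁ hu hμ₁)
    (ne_zero_of_mulVec_eq_smul_of_isUnit hP₂ hu hμ₂)
    (mul_eq_zero_of_anticommute_of_mulVec_eq_smul hP hu hμ₁ hμ₂)

/-- If `P₁, P₂` anticommute and `Q₁, Q₂` anticommute (all invertible), then no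
nonzero pure tensor is a simultaneous eigenvector of `P₁ ⊗ₖ Q₁` and `P₂ ⊗ₖ Q₂`. -/
theorem no_product_common_eigenvector {m p : Type*} [Fintype m] [Fintype p] [DecidableEq m] [DecidableEq p]
    (P₁ P₂ : Matrix m m ℂ) (Q₁ Q₂ : Matrix p p ℂ)
    (hP₁ : IsUnit P₁) (hP₂ : IsUnit P₂) (hQ₁ : IsUnit Q₁) (hQ₂ : IsUnit Q₂)
    (hP : P₁ * P₂ = -(P₂ * P₁)) (hQ : Q₁ * Q₂ = -(Q₂ * Q₁)) :
    ¬ ∃ (u : m → ℂ) (v : p → ℂ) (lam₁ lam₂ : ℂ), u ≠ 0 ∧ v ≠ 0 ∧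
      (P₁ ⊗ₖ Q₁) *ᵥ tensorVec u v = lam₁ • tensorVec u v ∧
      (P₂ ⊗ₖ Q₂) *ᵥ tensorVec u v = lam₂ • tensorVec u v :=
  no_product_common_eigenvector_general P₁ P₂ Q₁ Q₂ hP₁ hP₂ hQ₁ hQ₂ hP
end

section
/- Let d : ℕ with 0 < d and set ω = Complex.exp(2 * π * I / d). Define the matrices over ℂ indexed by ZMod d: the boost Z with Z i j = (if i = j then ω^(i.val) else 0), the shift X with X i j = (if i = j + 1 then 1 else 0), the qudit Hadamard H with H i j = ω^(i.val * j.val) / Real.sqrt d, and the SUM gate on ZMod d × ZMod d with SUM (m, s) (m', n) = (if m = m' ∧ s = m' + n then 1 else 0). Then the qudit Bell transformation maps the Pauli-basis labels to the vectorized Heisenberg–Weyl operators: for all a_z, a_x : ZMod d, (SUM * (H ⊗ₖ 1)) *ᵥ (Pi.single (a_z, -a_x) 1) = ((Real.sqrt d : ℂ))⁻¹ • vec (Z ^ (a_z.val) * X ^ (a_x.val)). -/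
/-!
Everything is computed entrywise. `Z ^ a * X ^ b` is a diagonal matrix times a shift matrix, so
it is supported on `i = j + b` with entry `ω ^ (i * a)`. The SUM gate acts by
`v ↦ ((i, j) ↦ v (i, j - i))`, so the column `(a_z, -a_x)` of `SUM * (H ⊗ 1)` is supported on
`j - i = -a_x`, with entry `H i a_z = ω ^ (i * a_z) / √d`.
-/

open Kronecker Matrix Complex

/-- Row-stacking vectorization of a square matrix. -/
def vec {m : Type*} (O : Matrix m m ℂ) : m × m → ℂ := fun z => O z.1 z.2

/-- The primitive `d`-th root of unity `ω = exp(2πi/d)`. -/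
noncomputable def omega (d : ℕ) : ℂ := Complex.exp (2 * Real.pi * Complex.I / d)

/-- The qudit boost (clock) operator `Z`. -/
noncomputable def quditZ (d : ℕ) : Matrix (ZMod d) (ZMod d) ℂ :=
  Matrix.of fun i j => if i = j then (omega d) ^ i.val else 0

/-- The qudit shift operator `X`. -/
def quditX (d : ℕ) : Matrix (ZMod d) (ZMod d) ℂ :=
  Matrix.of fun i j => if i = j + 1 then 1 else 0

/-- The qudit Hadamard (Fourier) gate `H`. -/
noncomputable def quditH (d : ℕ) : Matrix (ZMod d) (ZMod d) ℂ :=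
  Matrix.of fun i j => (omega d) ^ (i.val * j.val) / (Real.sqrt d : ℂ)

/-- The qudit SUM gate. -/
def quditSUM (d : ℕ) : Matrix (ZMod d × ZMod d) (ZMod d × ZMod d) ℂ :=
  Matrix.of fun z w => if z.1 = w.1 ∧ z.2 = w.1 + w.2 then 1 else 0

def shiftMatrix {G : Type*} [Add G] [DecidableEq G] (R : Type*) [Zero R] [One R] (g : G) :
    Matrix G G R :=
  Matrix.of fun i j => if i = j + g then 1 else 0

section shiftMatrix

variable {G R : Type*} [AddCommMonoid G] [DecidableEq G] [Semiring R]

@[simp]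
lemma shiftMatrix_zero : shiftMatrix R (0 : G) = 1 := by
  ext i j
  simp [shiftMatrix, Matrix.one_apply]

lemma shiftMatrix_mul_shiftMatrix [Fintype G] (g h : G) :
    shiftMatrix R g * shiftMatrix R h = shiftMatrix R (g + h) := by
  ext i j
  simp only [shiftMatrix, Matrix.mul_apply, Matrix.of_apply, mul_ite, mul_one, mul_zero]
  rw [Finset.sum_ite_eq' Finset.univ (j + h), if_pos (Finset.mem_univ _), add_assoc, add_comm h]

lemma shiftMatrix_pow [Fintype G] (g : G) (n : ℕ) :
    shiftMatrix R g ^ n = shiftMatrix R (n • g) := by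
  induction n with
  | zero => simp
  | succ n ih => rw [pow_succ, ih, shiftMatrix_mul_shiftMatrix, succ_nsmul]

end shiftMatrix

section qudit

variable {d : ℕ}

lemma quditZ_eq_diagonal : quditZ d = Matrix.diagonal fun i => omega d ^ i.val := by
  ext i j
  simp [quditZ, Matrix.diagonal_apply]

variable [NeZero d]

lemma quditX_pow (n : ℕ) : quditX d ^ n = shiftMatrix ℂ (n : ZMod d) := by
  rw [show quditX d = shiftMatrix ℂ 1 from rfl, shiftMatrix_pow, nsmul_one]

lemma vec_quditZ_pow_mul_quditX_pow (a : ℕ) (b i j : ZMod d) :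
    _root_.vec (quditZ d ^ a * quditX d ^ b.val) (i, j) =
      if i = j + b then omega d ^ (i.val * a) else 0 := by
  simp [_root_.vec, quditZ_eq_diagonal, Matrix.diagonal_pow, quditX_pow, Matrix.diagonal_mul,
    shiftMatrix, pow_mul]

lemma quditSUM_mulVec (v : ZMod d × ZMod d → ℂ) (i j : ZMod d) :
    (quditSUM d *ᵥ v) (i, j) = v (i, j - i) := by
  have hw (w : ZMod d × ZMod d) : (i = w.1 ∧ j = w.1 + w.2) ↔ (i, j - i) = w := by
    obtain ⟨m, n⟩ := w
    simp only [Prod.mk.injEq]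
    constructor <;> rintro ⟨rfl, rfl⟩ <;> simp
  simp [quditSUM, Matrix.mulVec, dotProduct, hw]

end qudit

theorem qudit_bell_transformation_general (d : ℕ) [NeZero d] (a_z a_x : ZMod d) :
    (quditSUM d * (quditH d ⊗ₖ (1 : Matrix (ZMod d) (ZMod d) ℂ))) *ᵥ
        Pi.single ((a_z, -a_x) : ZMod d × ZMod d) (1 : ℂ) =
      ((Real.sqrt d : ℂ))⁻¹ • _root_.vec (quditZ d ^ a_z.val * quditX d ^ a_x.val) := by
  funext ⟨i, j⟩
  rw [← Matrix.mulVec_mulVec, quditSUM_mulVec, Pi.smul_apply, vec_quditZ_pow_mul_quditX_pow,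
    Matrix.mulVec_single_one]
  have hshift : j - i = -a_x ↔ i = j + a_x := by
    constructor <;> intro h <;> linear_combination -h
  simp [quditH, Matrix.one_apply, hshift, div_eq_inv_mul]

/-- The qudit Bell transformation maps the Pauli-basis labels to the vectorized
Heisenberg–Weyl operators. -/
theorem qudit_bell_transformation (d : ℕ) (hd : 0 < d) [NeZero d] (a_z a_x : ZMod d) :
    (quditSUM d * (quditH d ⊗ₖ (1 : Matrix (ZMod d) (ZMod d) ℂ))) *ᵥ
        Pi.single ((a_z, -a_x) : ZMod d × ZMod d) (1 : ℂ) =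
      ((Real.sqrt d : ℂ))⁻¹ • _root_.vec (quditZ d ^ a_z.val * quditX d ^ a_x.val) :=
  qudit_bell_transformation_general d a_z a_x
end

section
/- Let m be a nonempty finite type with N = Fintype.card m. Let O, O', U, U' : Matrix m m ℂ with Oᴴ = O, O'ᴴ = O', O * O = 1, O' * O' = 1, Uᴴ * U = 1, U * Uᴴ = 1, U'ᴴ * U' = 1, and U' * U'ᴴ = 1. Define v = vec (O' * U' * (Uᴴ * O * U) * U'ᴴ), w = vec (1 : Matrix m m ℂ), and the ancilla state ψ : ((m × m) × Fin 2) → ℂ by ψ (z, b) = (Real.sqrt (2 * N))⁻¹ * (if b = 1 then v z else w z). Let X₂ : Matrix (Fin 2) (Fin 2) ℂ be the Pauli flip matrix !![0, 1; 1, 0]. Then the interferometric circuit computes the two-point correlator: ∑_{(z,b)} star (ψ (z, b)) * ((((1 : Matrix (m × m) (m × m) ℂ) ⊗ₖ X₂) *ᵥ ψ) (z, b)) = trace ((U'ᴴ * O' * U') * (Uᴴ * O * U)) / N. -/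
open Kronecker Matrix

/-!
Split along the ancilla, `ψ = (2N)^{-1/2} (w, v)`, and `1 ⊗ X` swaps the two halves, so
`⟪ψ, (1 ⊗ X) ψ⟫ = (⟪w, v⟫ + ⟪v, w⟫) / 2N`. The Hilbert–Schmidt pairing `⟪vec 1, vec M⟫` is `tr M`,
which by cyclicity is `tr ((U'ᴴ O' U') (Uᴴ O U))`; a trace of a product of two Hermitian
matrices is real, so `⟪v, w⟫ = conj ⟪w, v⟫ = ⟪w, v⟫`.
-/

theorem vec_eq_vec_transpose {m : Type*} (A : Matrix m m ℂ) : _root_.vec A = Matrix.vec Aᵀ :=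
  rfl

theorem star_vec_dotProduct_vec {m : Type*} [Fintype m] (A B : Matrix m m ℂ) :
    star (_root_.vec A) ⬝ᵥ _root_.vec B = (Aᴴ * B).trace := by
  rw [vec_eq_vec_transpose, vec_eq_vec_transpose, Matrix.star_vec_dotProduct_vec,
    conjTranspose_transpose_eq_transpose_conjTranspose, ← transpose_mul, trace_transpose,
    trace_mul_comm]

theorem Matrix.IsHermitian.star_trace_mul {n R : Type*} [Fintype n] [CommSemiring R] [StarRing R]
    {A B : Matrix n n R} (hA : A.IsHermitian) (hB : B.IsHermitian) :
    star (A * B).trace = (A * B).trace := by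
  rw [← trace_conjTranspose, conjTranspose_mul, hA.eq, hB.eq, trace_mul_comm]

theorem star_smul_dotProduct_mulVec_smul {n R : Type*} [Fintype n] [CommSemiring R] [StarRing R]
    (M : Matrix n n R) (c : R) (x : n → R) :
    star (c • x) ⬝ᵥ (M *ᵥ (c • x)) = star c * c * (star x ⬝ᵥ (M *ᵥ x)) := by
  rw [star_smul, mulVec_smul, smul_dotProduct, dotProduct_smul, smul_smul, smul_eq_mul]

theorem star_ofReal_sqrt_inv_mul_self {x : ℝ} (hx : 0 ≤ x) :
    star ((√x : ℂ)⁻¹) * (√x : ℂ)⁻¹ = (x : ℂ)⁻¹ := by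
  rw [star_inv₀, Complex.star_def, Complex.conj_ofReal, ← mul_inv, ← Complex.ofReal_mul,
    Real.mul_self_sqrt hx]

def ancillaState {ι R : Type*} [Zero R] (w v : ι → R) : ι × Fin 2 → R :=
  fun zb => if zb.2 = 1 then v zb.1 else w zb.1

theorem one_kronecker_mulVec_apply {ι κ R : Type*} [Fintype ι] [Fintype κ] [DecidableEq ι]
    [Semiring R] (X : Matrix κ κ R) (ψ : ι × κ → R) (z : ι) (b : κ) :
    ((1 ⊗ₖ X) *ᵥ ψ) (z, b) = ∑ c, X b c * ψ (z, c) := by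
  simp [mulVec, dotProduct, Fintype.sum_prod_type, one_apply, ite_mul]

theorem star_ancillaState_dotProduct_pauliX {ι R : Type*} [Fintype ι] [DecidableEq ι]
    [Semiring R] [StarRing R] (w v : ι → R) :
    star (ancillaState w v) ⬝ᵥ ((1 ⊗ₖ !![0, 1; 1, 0]) *ᵥ ancillaState w v) =
      star w ⬝ᵥ v + star v ⬝ᵥ w := by
  simp [dotProduct, Fintype.sum_prod_type, one_kronecker_mulVec_apply, ancillaState,
    Finset.sum_add_distrib]

theorem interferometric_two_point_correlator_general {m : Type*} [Fintype m] [DecidableEq m]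
    (O O' U U' : Matrix m m ℂ)
    (hO : Oᴴ = O) (hO' : O'ᴴ = O')
    (N : ℕ)
    (v w : m × m → ℂ)
    (hv : v = _root_.vec (O' * U' * (Uᴴ * O * U) * U'ᴴ))
    (hw : w = _root_.vec (1 : Matrix m m ℂ))
    (ψ : (m × m) × Fin 2 → ℂ)
    (hψ : ∀ z : m × m, ∀ b : Fin 2,
      ψ (z, b) = ((Real.sqrt (2 * N) : ℂ))⁻¹ * (if b = 1 then v z else w z))
    (X₂ : Matrix (Fin 2) (Fin 2) ℂ) (hX₂ : X₂ = !![0, 1; 1, 0]) :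
    ∑ zb : (m × m) × Fin 2,
        star (ψ zb) * ((((1 : Matrix (m × m) (m × m) ℂ) ⊗ₖ X₂) *ᵥ ψ) zb) =
      ((U'ᴴ * O' * U') * (Uᴴ * O * U)).trace / N := by
  set T := ((U'ᴴ * O' * U') * (Uᴴ * O * U)).trace
  have hT : star T = T :=
    (isHermitian_conjTranspose_mul_mul U' hO').star_trace_mul
      (isHermitian_conjTranspose_mul_mul U hO)
  have hwv : star w ⬝ᵥ v = T := by
    rw [hw, hv, _root_.star_vec_dotProduct_vec, conjTranspose_one, Matrix.one_mul,
      trace_mul_cycle]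
    simp only [T, Matrix.mul_assoc]
  have hvw : star v ⬝ᵥ w = T := by rw [star_dotProduct, hwv, hT]
  have hψ' : ψ = ((√(2 * N) : ℝ) : ℂ)⁻¹ • ancillaState w v := funext fun zb => hψ zb.1 zb.2
  change star ψ ⬝ᵥ _ = T / N
  rw [hψ', hX₂, star_smul_dotProduct_mulVec_smul, star_ofReal_sqrt_inv_mul_self (by positivity),
    star_ancillaState_dotProduct_pauliX, hwv, hvw]
  push_cast
  ring

/-- The interferometric circuit computes the two-point correlator
`trace(O'(t') O(t)) / N` as the expectation value of Pauli-`X` on the ancilla. -/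
theorem interferometric_two_point_correlator {m : Type*} [Fintype m] [DecidableEq m]
    [Nonempty m]
    (O O' U U' : Matrix m m ℂ)
    (hO : Oᴴ = O) (hO' : O'ᴴ = O')
    (hOsq : O * O = 1) (hO'sq : O' * O' = 1)
    (hU : Uᴴ * U = 1) (hU' : U * Uᴴ = 1)
    (hV : U'ᴴ * U' = 1) (hV' : U' * U'ᴴ = 1)
    (N : ℕ) (hN : N = Fintype.card m)
    (v w : m × m → ℂ)
    (hv : v = _root_.vec (O' * U' * (Uᴴ * O * U) * U'ᴴ))
    (hw : w = _root_.vec (1 : Matrix m m ℂ))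
    (ψ : (m × m) × Fin 2 → ℂ)
    (hψ : ∀ z : m × m, ∀ b : Fin 2,
      ψ (z, b) = ((Real.sqrt (2 * N) : ℂ))⁻¹ * (if b = 1 then v z else w z))
    (X₂ : Matrix (Fin 2) (Fin 2) ℂ) (hX₂ : X₂ = !![0, 1; 1, 0]) :
    ∑ zb : (m × m) × Fin 2,
        star (ψ zb) * ((((1 : Matrix (m × m) (m × m) ℂ) ⊗ₖ X₂) *ᵥ ψ) zb) =
      ((U'ᴴ * O' * U') * (Uᴴ * O * U)).trace / N :=
  interferometric_two_point_correlator_general O O' U U' hO hO' N v w hv hw ψ hψ X₂ hX₂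
end
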